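/- Let q be a prime power and let α, β, γ, δ be distinct elements of an algebraic closure of F_q such that the unordered pair of unordered pairs {{α,β},{γ,δ}} equals {{α^q,β^q},{γ^q,δ^q}}. Then there exists a unique element of PGL₂(F_q) that swaps α with β and γ with δ, and this element is an involution. -/
import Mathlib


open Matrix
open scoped LinearAlgebra.Projectivization

/-- The Möbius action of `GL(2,K)` on the projective line `ℙ K (Fin 2 → K)`.
Since scalar matrices act trivially, this realizes the action of `PGL₂(K)`. -/
noncomputable def mobius {K : Type*} [Field K] (M : GL (Fin 2) K)
    (p : ℙ K (Fin 2 → K)) : ℙ K (Fin 2 → K) :=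
  Projectivization.map
    (LinearMap.GeneralLinearGroup.toLinearEquiv
      (Matrix.GeneralLinearGroup.toLin M)).toLinearMap
    (LinearEquiv.injective _) p

/-- The point `[x : 1]` of the projective line. -/
noncomputable def pt {K : Type*} [Field K] (x : K) : ℙ K (Fin 2 → K) :=
  Projectivization.mk K ![x, 1] (by
    intro h
    simpa using congrFun h 1)


section helpers
variable {K : Type*} [Field K]

lemma GL_mulVec_ne_zero (M : GL (Fin 2) K) {v : Fin 2 → K} (hv : v ≠ 0) :
    (M : Matrix (Fin 2) (Fin 2) K).mulVec v ≠ 0 := by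
  intro h
  apply hv
  have := congrArg ((↑(M⁻¹) : Matrix (Fin 2) (Fin 2) K).mulVec) h
  rwa [Matrix.mulVec_mulVec, Units.inv_mul, Matrix.one_mulVec, Matrix.mulVec_zero] at this

lemma mobius_mk (M : GL (Fin 2) K) (v : Fin 2 → K) (hv : v ≠ 0)
    (hw : (M : Matrix (Fin 2) (Fin 2) K).mulVec v ≠ 0) :
    mobius M (Projectivization.mk K v hv) =
      Projectivization.mk K ((M : Matrix (Fin 2) (Fin 2) K).mulVec v) hw := by
  rw [mobius, Projectivization.map_mk]
  rfl

lemma mobius_mul (M N : GL (Fin 2) K) (p : ℙ K (Fin 2 → K)) :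
    mobius (M * N) p = mobius M (mobius N p) := by
  induction p using Projectivization.ind with
  | h v hv =>
    rw [mobius_mk N v hv (GL_mulVec_ne_zero N hv),
      mobius_mk M _ (GL_mulVec_ne_zero N hv) (GL_mulVec_ne_zero M (GL_mulVec_ne_zero N hv)),
      mobius_mk (M * N) v hv (by
        rw [Matrix.GeneralLinearGroup.coe_mul, ← Matrix.mulVec_mulVec]
        exact GL_mulVec_ne_zero M (GL_mulVec_ne_zero N hv))]
    congr 1
    rw [Matrix.GeneralLinearGroup.coe_mul, ← Matrix.mulVec_mulVec]

lemma mobius_scalar {M : GL (Fin 2) K} {a : K} (ha : a ≠ 0)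
    (h : (M : Matrix (Fin 2) (Fin 2) K) = a • (1 : Matrix (Fin 2) (Fin 2) K))
    (p : ℙ K (Fin 2 → K)) : mobius M p = p := by
  induction p using Projectivization.ind with
  | h v hv =>
    rw [mobius_mk M v hv (GL_mulVec_ne_zero M hv)]
    apply (Projectivization.mk_eq_mk_iff K _ _ _ _).mpr
    refine ⟨Units.mk0 a ha, ?_⟩
    rw [h]
    simp [Matrix.smul_mulVec, Matrix.one_mulVec]

end helpers

section pt
variable {K : Type*} [Field K]

lemma mulVec_pair (M : Matrix (Fin 2) (Fin 2) K) (x y : K) :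
    M.mulVec ![x, y] = ![M 0 0 * x + M 0 1 * y, M 1 0 * x + M 1 1 * y] := by
  funext i
  fin_cases i <;>
    simp [Matrix.mulVec, dotProduct, Fin.sum_univ_two]

lemma pair_ne_zero (x y : K) (h : y ≠ 0) : (![x, y] : Fin 2 → K) ≠ 0 := by
  intro hc
  exact h (by simpa using congrFun hc 1)

lemma mobius_pt_of (M : GL (Fin 2) K) {x y : K}
    (hd : (M : Matrix (Fin 2) (Fin 2) K) 1 0 * x + (M : Matrix (Fin 2) (Fin 2) K) 1 1 ≠ 0)
    (h : (M : Matrix (Fin 2) (Fin 2) K) 0 0 * x + (M : Matrix (Fin 2) (Fin 2) K) 0 1 =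
      y * ((M : Matrix (Fin 2) (Fin 2) K) 1 0 * x + (M : Matrix (Fin 2) (Fin 2) K) 1 1)) :
    mobius M (pt x) = pt y := by
  rw [pt, mobius_mk M _ _ (GL_mulVec_ne_zero M (pair_ne_zero x 1 one_ne_zero)), pt]
  apply (Projectivization.mk_eq_mk_iff K _ _ _ _).mpr
  refine ⟨Units.mk0 _ hd, ?_⟩
  rw [mulVec_pair]
  funext i
  fin_cases i <;> simp [h] <;> ring

lemma mobius_pt_elim (M : GL (Fin 2) K) {x y : K}
    (h : mobius M (pt x) = pt y) :
    (M : Matrix (Fin 2) (Fin 2) K) 1 0 * x + (M : Matrix (Fin 2) (Fin 2) K) 1 1 ≠ 0 ∧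
    (M : Matrix (Fin 2) (Fin 2) K) 0 0 * x + (M : Matrix (Fin 2) (Fin 2) K) 0 1 =
      y * ((M : Matrix (Fin 2) (Fin 2) K) 1 0 * x + (M : Matrix (Fin 2) (Fin 2) K) 1 1) := by
  rw [pt, mobius_mk M _ _ (GL_mulVec_ne_zero M (pair_ne_zero x 1 one_ne_zero)), pt] at h
  obtain ⟨u, hu⟩ := (Projectivization.mk_eq_mk_iff K _ _ _ _).mp h
  rw [mulVec_pair] at hu
  have h0 := congrFun hu 0
  have h1 := congrFun hu 1
  simp [Units.smul_def, smul_eq_mul] at h0 h1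
  constructor
  · rw [← h1]
    exact u.ne_zero
  · rw [← h0, ← h1]
    ring

end pt

section frob
open Polynomial

lemma mem_range_of_pow_card_eq {F K : Type*} [Field F] [Fintype F] [Field K] [Algebra F K]
    {x : K} (h : x ^ Fintype.card F = x) : ∃ a : F, algebraMap F K a = x := by
  classical
  set q := Fintype.card F with hq
  have hq1 : 1 < q := Fintype.one_lt_card
  set p : K[X] := X ^ q - X with hp
  have hp0 : p ≠ 0 := FiniteField.X_pow_card_sub_X_ne_zero K hq1
  have hinj : Function.Injective (algebraMap F K) := (algebraMap F K).injective
  set S : Finset K := Finset.univ.image (algebraMap F K) with hS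
  have hScard : S.card = q := by
    rw [hS, Finset.card_image_of_injective _ hinj, Finset.card_univ]
  have hroot : ∀ y ∈ S, y ∈ p.roots.toFinset := by
    intro y hy
    obtain ⟨a, -, rfl⟩ := Finset.mem_image.mp hy
    rw [Multiset.mem_toFinset, mem_roots hp0]
    simp only [hp, IsRoot.def, eval_sub, eval_pow, eval_X, sub_eq_zero]
    rw [← map_pow, FiniteField.pow_card]
  have hsub : S ⊆ p.roots.toFinset := hroot
  have hcard : p.roots.toFinset.card ≤ q := by
    calc p.roots.toFinset.card ≤ Multiset.card p.roots := Multiset.toFinset_card_le _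
    _ ≤ p.natDegree := p.card_roots' 
    _ = q := FiniteField.X_pow_card_sub_X_natDegree_eq K hq1
  have hEq : S = p.roots.toFinset := Finset.eq_of_subset_of_card_le hsub (hScard ▸ hcard)
  have hx : x ∈ p.roots.toFinset := by
    rw [Multiset.mem_toFinset, mem_roots hp0]
    simp only [hp, IsRoot.def, eval_sub, eval_pow, eval_X, sub_eq_zero]
    exact h
  rw [← hEq] at hx
  obtain ⟨a, -, ha⟩ := Finset.mem_image.mp hx
  exact ⟨a, ha⟩

end frob

/-- Let `q` be a prime power, `F` the field with `q` elements and `α, β, γ, δ` distinct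
elements of an algebraic closure `K` of `F` with `{{α,β},{γ,δ}} = {{α^q,β^q},{γ^q,δ^q}}`.
Then there is an element of `PGL₂(F)` (represented by a matrix `M ∈ GL₂(F)`, acting on
`ℙ¹(K)` through the inclusion `F ⊆ K`) swapping `α` with `β` and `γ` with `δ`; it is an
involution, and it is unique as an element of `PGL₂(F)`, i.e. any two such matrices
induce the same transformation of `ℙ¹(K)`. -/
theorem unique_rational_involution_swapping_galois_pairs
    {F : Type*} [Field F] [Fintype F] (q : ℕ) (hq : Fintype.card F = q)
    {K : Type*} [Field K] [Algebra F K] [IsAlgClosure F K]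
    (α β γ δ : K)
    (hαβ : α ≠ β) (hαγ : α ≠ γ) (hαδ : α ≠ δ) (hβγ : β ≠ γ) (hβδ : β ≠ δ)
    (hγδ : γ ≠ δ)
    (hgal : ({({α, β} : Set K), {γ, δ}} : Set (Set K)) =
      {({α ^ q, β ^ q} : Set K), {γ ^ q, δ ^ q}}) :
    ∃ M : GL (Fin 2) F,
      mobius (Matrix.GeneralLinearGroup.map (algebraMap F K) M) (pt α) = pt β ∧
      mobius (Matrix.GeneralLinearGroup.map (algebraMap F K) M) (pt β) = pt α ∧
      mobius (Matrix.GeneralLinearGroup.map (algebraMap F K) M) (pt γ) = pt δ ∧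
      mobius (Matrix.GeneralLinearGroup.map (algebraMap F K) M) (pt δ) = pt γ ∧
      (∀ p, mobius (Matrix.GeneralLinearGroup.map (algebraMap F K) M)
        (mobius (Matrix.GeneralLinearGroup.map (algebraMap F K) M) p) = p) ∧
      (∀ M' : GL (Fin 2) F,
        mobius (Matrix.GeneralLinearGroup.map (algebraMap F K) M') (pt α) = pt β →
        mobius (Matrix.GeneralLinearGroup.map (algebraMap F K) M') (pt β) = pt α →
        mobius (Matrix.GeneralLinearGroup.map (algebraMap F K) M') (pt γ) = pt δ →
        mobius (Matrix.GeneralLinearGroup.map (algebraMap F K) M') (pt δ) = pt γ →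
        ∀ p, mobius (Matrix.GeneralLinearGroup.map (algebraMap F K) M') p =
          mobius (Matrix.GeneralLinearGroup.map (algebraMap F K) M) p) := by
  classical
  have hq1 : 1 < q := hq ▸ Fintype.one_lt_card
  haveI : IsAlgClosed K := IsAlgClosure.isAlgClosed F
  haveI : CharP F (ringChar F) := ringChar.charP F
  obtain ⟨n, hpprime, hcard⟩ := FiniteField.card F (ringChar F)
  haveI : CharP K (ringChar F) :=
    charP_of_injective_algebraMap (algebraMap F K).injective (ringChar F)
  haveI := Fact.mk hpprime
  have hqpn : q = (ringChar F) ^ (n : ℕ) := by rw [← hq, hcard]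
  have hadd : ∀ x y : K, (x + y) ^ q = x ^ q + y ^ q := fun x y => by
    rw [hqpn]; exact add_pow_char_pow x y _ _
  have hsub : ∀ x y : K, (x - y) ^ q = x ^ q - y ^ q := fun x y => by
    rw [hqpn]; exact sub_pow_char_pow x y _
  have hnegq : ∀ x : K, (-x) ^ q = -(x ^ q) := fun x => by
    have h := hsub 0 x
    simpa [zero_pow (by omega : q ≠ 0)] using h
  set a : K := α * β - γ * δ with ha_def
  set b : K := γ * δ * (α + β) - α * β * (γ + δ) with hb_def
  set c : K := (α + β) - (γ + δ) with hc_def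
  set d : K := -(α * β - γ * δ) with hd_def
  have expa : a ^ q = α ^ q * β ^ q - γ ^ q * δ ^ q := by
    rw [ha_def, hsub, mul_pow, mul_pow]
  have expb : b ^ q = γ ^ q * δ ^ q * (α ^ q + β ^ q) - α ^ q * β ^ q * (γ ^ q + δ ^ q) := by
    rw [hb_def, hsub, mul_pow, mul_pow, mul_pow, mul_pow, hadd, hadd]
  have expc : c ^ q = (α ^ q + β ^ q) - (γ ^ q + δ ^ q) := by
    rw [hc_def, hsub, hadd, hadd]
  rw [Set.pair_eq_pair_iff] at hgal
  obtain ⟨lam, hlam0, hA, hB, hC⟩ :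
      ∃ lam : K, lam ≠ 0 ∧ (lam * a) ^ q = lam * a ∧ (lam * b) ^ q = lam * b ∧
        (lam * c) ^ q = lam * c := by
    rcases hgal with ⟨h1, h2⟩ | ⟨h1, h2⟩
    · rw [Set.pair_eq_pair_iff] at h1 h2
      have hsp1 : α ^ q + β ^ q = α + β ∧ α ^ q * β ^ q = α * β := by
        rcases h1 with ⟨e1, e2⟩ | ⟨e1, e2⟩
        · exact ⟨by linear_combination -e1 - e2, by linear_combination (-(β ^ q)) * e1 - α * e2⟩
        · exact ⟨by linear_combination -e1 - e2, by linear_combination (-(α ^ q)) * e1 - α * e2⟩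
      have hsp2 : γ ^ q + δ ^ q = γ + δ ∧ γ ^ q * δ ^ q = γ * δ := by
        rcases h2 with ⟨e1, e2⟩ | ⟨e1, e2⟩
        · exact ⟨by linear_combination -e1 - e2, by linear_combination (-(δ ^ q)) * e1 - γ * e2⟩
        · exact ⟨by linear_combination -e1 - e2, by linear_combination (-(γ ^ q)) * e1 - γ * e2⟩
      refine ⟨1, one_ne_zero, ?_, ?_, ?_⟩ <;> simp only [one_mul]
      · rw [expa, hsp1.2, hsp2.2]
      · rw [expb, hsp1.1, hsp1.2, hsp2.1, hsp2.2]
      · rw [expc, hsp1.1, hsp2.1]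
    · rw [Set.pair_eq_pair_iff] at h1 h2
      -- h1 : {α,β} = {γ^q, δ^q} cases ; h2 : {γ,δ} = {α^q, β^q} cases
      have hsp1 : α ^ q + β ^ q = γ + δ ∧ α ^ q * β ^ q = γ * δ := by
        rcases h2 with ⟨e1, e2⟩ | ⟨e1, e2⟩
        · exact ⟨by linear_combination -e1 - e2, by linear_combination (-(β ^ q)) * e1 - γ * e2⟩
        · exact ⟨by linear_combination -e1 - e2, by linear_combination (-(α ^ q)) * e1 - γ * e2⟩
      have hsp2 : γ ^ q + δ ^ q = α + β ∧ γ ^ q * δ ^ q = α * β := by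
        rcases h1 with ⟨e1, e2⟩ | ⟨e1, e2⟩
        · exact ⟨by linear_combination -e1 - e2, by linear_combination (-(δ ^ q)) * e1 - α * e2⟩
        · exact ⟨by linear_combination -e1 - e2, by linear_combination (-(γ ^ q)) * e1 - α * e2⟩
      obtain ⟨lam, hlam⟩ := IsAlgClosed.exists_pow_nat_eq (-1 : K) (n := q - 1) (by omega)
      have hlam0 : lam ≠ 0 := by
        intro h0
        rw [h0, zero_pow (by omega : q - 1 ≠ 0)] at hlam
        exact (neg_ne_zero.mpr (one_ne_zero)) hlam.symm
      have hlamq : lam ^ q = -lam := by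
        calc lam ^ q = lam ^ (q - 1) * lam := by
              rw [← pow_succ]; congr 1; omega
        _ = -lam := by rw [hlam]; ring
      have haq : a ^ q = -a := by rw [expa, hsp1.2, hsp2.2, ha_def]; ring
      have hbq : b ^ q = -b := by rw [expb, hsp1.1, hsp1.2, hsp2.1, hsp2.2, hb_def]; ring
      have hcq : c ^ q = -c := by rw [expc, hsp1.1, hsp2.1, hc_def]; ring
      refine ⟨lam, hlam0, ?_, ?_, ?_⟩ <;> rw [mul_pow, hlamq]
      · rw [haq]; ring
      · rw [hbq]; ring
      · rw [hcq]; ring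
  have hD : (lam * d) ^ q = lam * d := by
    have h1 : lam * d = -(lam * a) := by rw [hd_def, ha_def]; ring
    rw [h1, hnegq, hA]
  -- descend entries to F
  have hcardq : ∀ x : K, x ^ q = x → ∃ t : F, algebraMap F K t = x := fun x hx =>
    mem_range_of_pow_card_eq (by rw [hq]; exact hx)
  obtain ⟨a0, ha0⟩ := hcardq _ hA
  obtain ⟨b0, hb0⟩ := hcardq _ hB
  obtain ⟨c0, hc0⟩ := hcardq _ hC
  obtain ⟨d0, hd0⟩ := hcardq _ hD
  set B0 : Matrix (Fin 2) (Fin 2) F := !![a0, b0; c0, d0] with hB0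
  have hprod : (α - γ) * (α - δ) * (β - γ) * (β - δ) ≠ 0 :=
    mul_ne_zero (mul_ne_zero (mul_ne_zero (sub_ne_zero.mpr hαγ) (sub_ne_zero.mpr hαδ))
      (sub_ne_zero.mpr hβγ)) (sub_ne_zero.mpr hβδ)
  have hdetB0 : B0.det ≠ 0 := by
    have hmapdet : algebraMap F K B0.det =
        lam ^ 2 * -((α - γ) * (α - δ) * (β - γ) * (β - δ)) := by
      rw [hB0, Matrix.det_fin_two_of, map_sub, _root_.map_mul, _root_.map_mul, ha0, hb0, hc0, hd0,
        ha_def, hb_def, hc_def, hd_def]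
      ring
    intro h0
    rw [h0, map_zero] at hmapdet
    exact (mul_ne_zero (pow_ne_zero _ hlam0) (neg_ne_zero.mpr hprod)) hmapdet.symm
  set M : GL (Fin 2) F := Matrix.GeneralLinearGroup.mkOfDetNeZero B0 hdetB0 with hM
  set V : GL (Fin 2) K := Matrix.GeneralLinearGroup.map (algebraMap F K) M with hVdef
  have hVval : (V : Matrix (Fin 2) (Fin 2) K) = B0.map (algebraMap F K) := rfl
  have hV00 : (V : Matrix (Fin 2) (Fin 2) K) 0 0 = lam * a := by
    rw [hVval, Matrix.map_apply, hB0]; simpa using ha0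
  have hV01 : (V : Matrix (Fin 2) (Fin 2) K) 0 1 = lam * b := by
    rw [hVval, Matrix.map_apply, hB0]; simpa using hb0
  have hV10 : (V : Matrix (Fin 2) (Fin 2) K) 1 0 = lam * c := by
    rw [hVval, Matrix.map_apply, hB0]; simpa using hc0
  have hV11 : (V : Matrix (Fin 2) (Fin 2) K) 1 1 = lam * d := by
    rw [hVval, Matrix.map_apply, hB0]; simpa using hd0
  -- the four swapping statements
  have hmob1 : mobius V (pt α) = pt β := by
    apply mobius_pt_of
    · rw [hV10, hV11]
      have h : lam * c * α + lam * d = lam * ((α - γ) * (α - δ)) := by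
        rw [hc_def, hd_def]; ring
      rw [h]
      exact mul_ne_zero hlam0 (mul_ne_zero (sub_ne_zero.mpr hαγ) (sub_ne_zero.mpr hαδ))
    · rw [hV00, hV01, hV10, hV11, ha_def, hb_def, hc_def, hd_def]; ring
  have hmob2 : mobius V (pt β) = pt α := by
    apply mobius_pt_of
    · rw [hV10, hV11]
      have h : lam * c * β + lam * d = lam * ((β - γ) * (β - δ)) := by
        rw [hc_def, hd_def]; ring
      rw [h]
      exact mul_ne_zero hlam0 (mul_ne_zero (sub_ne_zero.mpr hβγ) (sub_ne_zero.mpr hβδ))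
    · rw [hV00, hV01, hV10, hV11, ha_def, hb_def, hc_def, hd_def]; ring
  have hmob3 : mobius V (pt γ) = pt δ := by
    apply mobius_pt_of
    · rw [hV10, hV11]
      have h : lam * c * γ + lam * d = lam * ((α - γ) * (γ - β)) := by
        rw [hc_def, hd_def]; ring
      rw [h]
      exact mul_ne_zero hlam0 (mul_ne_zero (sub_ne_zero.mpr hαγ)
        (sub_ne_zero.mpr (Ne.symm hβγ)))
    · rw [hV00, hV01, hV10, hV11, ha_def, hb_def, hc_def, hd_def]; ring
  have hmob4 : mobius V (pt δ) = pt γ := by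
    apply mobius_pt_of
    · rw [hV10, hV11]
      have h : lam * c * δ + lam * d = lam * ((α - δ) * (δ - β)) := by
        rw [hc_def, hd_def]; ring
      rw [h]
      exact mul_ne_zero hlam0 (mul_ne_zero (sub_ne_zero.mpr hαδ)
        (sub_ne_zero.mpr (Ne.symm hβδ)))
    · rw [hV00, hV01, hV10, hV11, ha_def, hb_def, hc_def, hd_def]; ring
  -- involution
  have hVV : ((V * V : GL (Fin 2) K) : Matrix (Fin 2) (Fin 2) K) =
      (lam ^ 2 * ((α - γ) * (α - δ) * (β - γ) * (β - δ))) • (1 : Matrix (Fin 2) (Fin 2) K) := by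
    have hcoe : ((V * V : GL (Fin 2) K) : Matrix (Fin 2) (Fin 2) K) =
        (V : Matrix (Fin 2) (Fin 2) K) * (V : Matrix (Fin 2) (Fin 2) K) := rfl
    rw [hcoe]
    ext i j
    fin_cases i <;> fin_cases j <;>
      simp [Matrix.mul_apply, Fin.sum_univ_two, Matrix.smul_apply, Matrix.one_apply,
        hV00, hV01, hV10, hV11, ha_def, hb_def, hc_def, hd_def] <;> ring
  have hinvol : ∀ p, mobius V (mobius V p) = p := fun p => by
    rw [← mobius_mul]
    exact mobius_scalar (mul_ne_zero (pow_ne_zero _ hlam0) hprod) hVV p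
  -- uniqueness
  have hmobone : ∀ p : ℙ K (Fin 2 → K), mobius (1 : GL (Fin 2) K) p = p := fun p =>
    mobius_scalar one_ne_zero (by simp) p
  have hmobinv : ∀ (W : GL (Fin 2) K) (x y : K),
      mobius W (pt x) = pt y → mobius W⁻¹ (pt y) = pt x := by
    intro W x y h
    rw [← h, ← mobius_mul, inv_mul_cancel]
    exact hmobone _
  refine ⟨M, hmob1, hmob2, hmob3, hmob4, hinvol, ?_⟩
  intro M' h1 h2 h3 h4 p
  set W : GL (Fin 2) K := Matrix.GeneralLinearGroup.map (algebraMap F K) M' with hW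
  set N : GL (Fin 2) K := W⁻¹ * V with hN
  have fixα : mobius N (pt α) = pt α := by
    rw [hN, mobius_mul, hmob1]; exact hmobinv W α β h1
  have fixβ : mobius N (pt β) = pt β := by
    rw [hN, mobius_mul, hmob2]; exact hmobinv W β α h2
  have fixγ : mobius N (pt γ) = pt γ := by
    rw [hN, mobius_mul, hmob3]; exact hmobinv W γ δ h3
  obtain ⟨-, eα⟩ := mobius_pt_elim N fixα
  obtain ⟨-, eβ⟩ := mobius_pt_elim N fixβ
  obtain ⟨-, eγ⟩ := mobius_pt_elim N fixγ
  have k1 : (N : Matrix (Fin 2) (Fin 2) K) 0 0 -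
      (N : Matrix (Fin 2) (Fin 2) K) 1 0 * (α + β) - (N : Matrix (Fin 2) (Fin 2) K) 1 1 = 0 := by
    have h := mul_eq_zero.mp (show (α - β) * ((N : Matrix (Fin 2) (Fin 2) K) 0 0 -
        (N : Matrix (Fin 2) (Fin 2) K) 1 0 * (α + β) - (N : Matrix (Fin 2) (Fin 2) K) 1 1) = 0 by
      linear_combination eα - eβ)
    exact h.resolve_left (sub_ne_zero.mpr hαβ)
  have k2 : (N : Matrix (Fin 2) (Fin 2) K) 0 0 -
      (N : Matrix (Fin 2) (Fin 2) K) 1 0 * (α + γ) - (N : Matrix (Fin 2) (Fin 2) K) 1 1 = 0 := by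
    have h := mul_eq_zero.mp (show (α - γ) * ((N : Matrix (Fin 2) (Fin 2) K) 0 0 -
        (N : Matrix (Fin 2) (Fin 2) K) 1 0 * (α + γ) - (N : Matrix (Fin 2) (Fin 2) K) 1 1) = 0 by
      linear_combination eα - eγ)
    exact h.resolve_left (sub_ne_zero.mpr hαγ)
  have hn10 : (N : Matrix (Fin 2) (Fin 2) K) 1 0 = 0 := by
    have h := mul_eq_zero.mp (show (β - γ) * (N : Matrix (Fin 2) (Fin 2) K) 1 0 = 0 by
      linear_combination k2 - k1)
    exact h.resolve_left (sub_ne_zero.mpr hβγ)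
  have hdiag : (N : Matrix (Fin 2) (Fin 2) K) 0 0 = (N : Matrix (Fin 2) (Fin 2) K) 1 1 := by
    linear_combination k1 + (α + β) * hn10
  have hn01 : (N : Matrix (Fin 2) (Fin 2) K) 0 1 = 0 := by
    linear_combination eα - α * hdiag + α ^ 2 * hn10
  have hdetN : ((N : Matrix (Fin 2) (Fin 2) K)).det ≠ 0 :=
    ((Matrix.isUnit_iff_isUnit_det _).mp N.isUnit).ne_zero
  have hn00 : (N : Matrix (Fin 2) (Fin 2) K) 0 0 ≠ 0 := by
    intro h0
    apply hdetN
    rw [Matrix.det_fin_two, hn10, hn01, h0]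
    ring
  have hscal : (N : Matrix (Fin 2) (Fin 2) K) =
      (N : Matrix (Fin 2) (Fin 2) K) 0 0 • (1 : Matrix (Fin 2) (Fin 2) K) := by
    ext i j
    fin_cases i <;> fin_cases j <;>
      simp [Matrix.smul_apply, Matrix.one_apply, hn10, hn01, hdiag]
  have hNfix : ∀ p, mobius N p = p := fun p => mobius_scalar hn00 hscal p
  calc mobius W p = mobius W (mobius N p) := by rw [hNfix]
    _ = mobius (W * N) p := (mobius_mul _ _ _).symm
    _ = mobius V p := by rw [hN, ← mul_assoc, mul_inv_cancel, one_mul]
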